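/- Let n₁ ≥ 2, n₂ ≥ 1, μ ∈ ℝ, a > 0 and b_{j,i} > 0 for j = 1,…,n₂, i = 2,…,n₁. For each fixed block j and index i with 2 ≤ i ≤ n₁, and for every fixed value of x_{j,i−1} ∈ ℝ, the conditional density of x_{j,i} given all preceding coordinates under the normalized Hybrid Rosenbrock density is Gaussian with mean x_{j,i−1}² and variance 1/(2 b_{j,i}): it equals √(b_{j,i}/π) · exp(−b_{j,i}(x_{j,i} − x_{j,i−1}²)²), and in particular depends on the previous coordinates only through x_{j,i−1}. -/
import Mathlib


open MeasureTheory Real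

/-- The Hybrid Rosenbrock kernel with block parameters `n₁, n₂`.  A state is a pair
`(x₁, xs)` where `xs j k` is the coordinate `x_{j, k+2}` (block `j`, within-block
index `i = k + 2`), and by convention the variable preceding `x_{j,2}` is `x₁`. -/
noncomputable def hybridRosenbrockKernel (n₁ n₂ : ℕ) (μ a : ℝ)
    (b : Fin n₂ → Fin (n₁ - 1) → ℝ)
    (x₁ : ℝ) (xs : Fin n₂ → Fin (n₁ - 1) → ℝ) : ℝ :=
  Real.exp (-a * (x₁ - μ) ^ 2 -
    ∑ j : Fin n₂, ∑ k : Fin (n₁ - 1),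
      b j k * (xs j k -
        (if hk : k.val = 0 then x₁
         else xs j ⟨k.val - 1, by have := k.isLt; omega⟩) ^ 2) ^ 2)

/-- The normalized Hybrid Rosenbrock density (kernel times normalizing constant). -/
noncomputable def hybridRosenbrockDensity (n₁ n₂ : ℕ) (μ a : ℝ)
    (b : Fin n₂ → Fin (n₁ - 1) → ℝ)
    (x₁ : ℝ) (xs : Fin n₂ → Fin (n₁ - 1) → ℝ) : ℝ :=
  (Real.sqrt a * (∏ j : Fin n₂, ∏ k : Fin (n₁ - 1), Real.sqrt (b j k)) /
      π ^ ((((n₁ - 1) * n₂ + 1 : ℕ) : ℝ) / 2)) *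
    hybridRosenbrockKernel n₁ n₂ μ a b x₁ xs

/-- The marginal density obtained from the normalized Hybrid Rosenbrock density by
integrating out the coordinates `x_{j',i'}` whose index `(j',i')` satisfies the
predicate `P`; the remaining coordinates are held fixed at `(x₁, xs)`. -/
noncomputable def hybridRosenbrockMarginal (n₁ n₂ : ℕ) (μ a : ℝ)
    (b : Fin n₂ → Fin (n₁ - 1) → ℝ)
    (P : Fin n₂ × Fin (n₁ - 1) → Prop) [DecidablePred P]
    (x₁ : ℝ) (xs : Fin n₂ → Fin (n₁ - 1) → ℝ) : ℝ :=
  ∫ z : {p : Fin n₂ × Fin (n₁ - 1) // P p} → ℝ,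
    hybridRosenbrockDensity n₁ n₂ μ a b x₁
      (fun j' k' => if h : P (j', k') then z ⟨(j', k'), h⟩ else xs j' k')

lemma gauss_lintegral {β : ℝ} (hβ : 0 < β) (c : ℝ) :
    ∫⁻ t : ℝ, ENNReal.ofReal (Real.exp (-β * (t - c) ^ 2)) =
      ENNReal.ofReal (Real.sqrt (π / β)) := by
  have hmeas : Measurable fun t : ℝ => ENNReal.ofReal (Real.exp (-β * t ^ 2)) := by
    fun_prop
  have h1 : ∫⁻ t : ℝ, ENNReal.ofReal (Real.exp (-β * (t - c) ^ 2)) =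
      ∫⁻ t : ℝ, ENNReal.ofReal (Real.exp (-β * t ^ 2)) :=
    (measurePreserving_sub_right volume c).lintegral_comp hmeas
  rw [h1, ← ofReal_integral_eq_lintegral_ofReal (integrable_exp_neg_mul_sq hβ)
    (Filter.Eventually.of_forall fun x => (Real.exp_pos _).le), integral_gaussian]

section Chain

variable {ι : Type} [Fintype ι] [DecidableEq ι] (b : ι → ℝ) (r : ι → ℕ)
  (m : ι → (ι → ℝ) → ℝ)

lemma chain_meas (hmm : ∀ i, Measurable (m i)) :
    Measurable fun z : ι → ℝ =>
      ENNReal.ofReal (∏ i, Real.exp (-(b i) * (z i - m i z) ^ 2)) := by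
  apply Measurable.ennreal_ofReal
  apply Finset.measurable_prod
  intro i _
  exact ((((measurable_pi_apply i).sub (hmm i)).pow_const 2).const_mul (-(b i))).exp

lemma chain_lmarginal (hb : ∀ i, 0 < b i) (hmm : ∀ i, Measurable (m i))
    (hm : ∀ i (z z' : ι → ℝ), (∀ l, r l < r i → z l = z' l) → m i z = m i z')
    (s : Finset ι) :
    (∀ l ∈ s, ∀ i, i ∉ s → r i ≤ r l) → ∀ x : ι → ℝ,
    (∫⋯∫⁻_s, (fun z => ENNReal.ofReal (∏ i, Real.exp (-(b i) * (z i - m i z) ^ 2)))) x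
      = (∏ i ∈ s, ENNReal.ofReal (Real.sqrt (π / b i))) *
        ENNReal.ofReal (∏ i ∈ sᶜ, Real.exp (-(b i) * (x i - m i x) ^ 2)) := by
  induction s using Finset.strongInduction with
  | _ s ihs =>
    intro hs x
    rcases s.eq_empty_or_nonempty with rfl | hsne
    · simp only [lmarginal_empty, Finset.prod_empty, one_mul, Finset.compl_empty]
    · obtain ⟨i₀, hi₀s, hmin⟩ := Finset.exists_min_image s r hsne
      rw [lmarginal_erase _ (chain_meas b m hmm) hi₀s]
      have hinner : ∀ t : ℝ,
          (∫⋯∫⁻_(s.erase i₀),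
            (fun z => ENNReal.ofReal (∏ i, Real.exp (-(b i) * (z i - m i z) ^ 2))))
            (Function.update x i₀ t)
          = (∏ i ∈ s.erase i₀, ENNReal.ofReal (Real.sqrt (π / b i))) *
            (ENNReal.ofReal (Real.exp (-(b i₀) * (t - m i₀ x) ^ 2)) *
             ENNReal.ofReal (∏ i ∈ sᶜ, Real.exp (-(b i) * (x i - m i x) ^ 2))) := by
        intro t
        rw [ihs (s.erase i₀) (Finset.erase_ssubset hi₀s)
          (by
            intro l hl i hi
            rcases eq_or_ne i i₀ with rfl | hne
            · exact hmin l (Finset.mem_of_mem_erase hl)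
            · exact hs l (Finset.mem_of_mem_erase hl) i
                (fun his => hi (Finset.mem_erase.mpr ⟨hne, his⟩)))]
        congr 1
        rw [Finset.compl_erase, Finset.prod_insert (by simp [hi₀s]),
          ENNReal.ofReal_mul (Real.exp_pos _).le]
        have h₀ : Function.update x i₀ t i₀ = t := Function.update_self i₀ t x
        have hm₀ : m i₀ (Function.update x i₀ t) = m i₀ x := by
          apply hm
          intro l hl
          have hne : l ≠ i₀ := by rintro rfl; omega
          exact Function.update_of_ne hne t x
        rw [h₀, hm₀]
        congr 1
        refine congrArg ENNReal.ofReal (Finset.prod_congr rfl ?_)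
        intro i hi
        have his : i ∉ s := Finset.mem_compl.mp hi
        have hne : i ≠ i₀ := by rintro rfl; exact his hi₀s
        have hri : r i ≤ r i₀ := hs i₀ hi₀s i his
        have hmi : m i (Function.update x i₀ t) = m i x := by
          apply hm
          intro l hl
          have hne' : l ≠ i₀ := by rintro rfl; omega
          exact Function.update_of_ne hne' t x
        rw [Function.update_of_ne hne, hmi]
      calc ∫⁻ t : ℝ, (∫⋯∫⁻_(s.erase i₀),
              (fun z => ENNReal.ofReal (∏ i, Real.exp (-(b i) * (z i - m i z) ^ 2))))
              (Function.update x i₀ t)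
          = ∫⁻ t : ℝ, (∏ i ∈ s.erase i₀, ENNReal.ofReal (Real.sqrt (π / b i))) *
              (ENNReal.ofReal (Real.exp (-(b i₀) * (t - m i₀ x) ^ 2)) *
               ENNReal.ofReal (∏ i ∈ sᶜ, Real.exp (-(b i) * (x i - m i x) ^ 2))) := by
            exact lintegral_congr hinner
        _ = (∏ i ∈ s.erase i₀, ENNReal.ofReal (Real.sqrt (π / b i))) *
              ((∫⁻ t : ℝ, ENNReal.ofReal (Real.exp (-(b i₀) * (t - m i₀ x) ^ 2))) *
               ENNReal.ofReal (∏ i ∈ sᶜ, Real.exp (-(b i) * (x i - m i x) ^ 2))) := by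
            rw [lintegral_const_mul _ (by
              exact (Measurable.ennreal_ofReal (by fun_prop)).mul_const _)]
            rw [lintegral_mul_const' _ _ (by simp)]
        _ = (∏ i ∈ s, ENNReal.ofReal (Real.sqrt (π / b i))) *
              ENNReal.ofReal (∏ i ∈ sᶜ, Real.exp (-(b i) * (x i - m i x) ^ 2)) := by
            rw [gauss_lintegral (hb i₀), ← Finset.mul_prod_erase s _ hi₀s]
            ring

lemma chain_lintegral (hb : ∀ i, 0 < b i) (hmm : ∀ i, Measurable (m i))
    (hm : ∀ i (z z' : ι → ℝ), (∀ l, r l < r i → z l = z' l) → m i z = m i z') :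
    ∫⁻ z : ι → ℝ, ENNReal.ofReal (∏ i, Real.exp (-(b i) * (z i - m i z) ^ 2)) =
      ∏ i, ENNReal.ofReal (Real.sqrt (π / b i)) := by
  rw [show (volume : Measure (ι → ℝ)) = Measure.pi (fun _ => volume) from volume_pi,
    lintegral_eq_lmarginal_univ (0 : ι → ℝ),
    chain_lmarginal b r m hb hmm hm Finset.univ (by simp) (0 : ι → ℝ)]
  simp

lemma chain_integral (hb : ∀ i, 0 < b i) (hmm : ∀ i, Measurable (m i))
    (hm : ∀ i (z z' : ι → ℝ), (∀ l, r l < r i → z l = z' l) → m i z = m i z') :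
    ∫ z : ι → ℝ, ∏ i, Real.exp (-(b i) * (z i - m i z) ^ 2) =
      ∏ i, Real.sqrt (π / b i) := by
  rw [integral_eq_lintegral_of_nonneg_ae
    (Filter.Eventually.of_forall fun z => Finset.prod_nonneg fun i _ => (Real.exp_pos _).le)
    (by
      apply Measurable.aestronglyMeasurable
      apply Finset.measurable_prod
      intro i _
      exact ((((measurable_pi_apply i).sub (hmm i)).pow_const 2).const_mul (-(b i))).exp),
    chain_lintegral b r m hb hmm hm,
    ← ENNReal.ofReal_prod_of_nonneg (fun i _ => Real.sqrt_nonneg _),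
    ENNReal.toReal_ofReal (Finset.prod_nonneg fun i _ => Real.sqrt_nonneg _)]

end Chain

lemma density_prod (n₁ n₂ : ℕ) (μ a : ℝ) (b : Fin n₂ → Fin (n₁ - 1) → ℝ)
    (x₁ : ℝ) (v : Fin n₂ → Fin (n₁ - 1) → ℝ) :
    hybridRosenbrockDensity n₁ n₂ μ a b x₁ v =
      (Real.sqrt a * (∏ j : Fin n₂, ∏ k : Fin (n₁ - 1), Real.sqrt (b j k)) /
        π ^ ((((n₁ - 1) * n₂ + 1 : ℕ) : ℝ) / 2)) * Real.exp (-a * (x₁ - μ) ^ 2) *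
      ∏ p : Fin n₂ × Fin (n₁ - 1),
        Real.exp (-(b p.1 p.2) * (v p.1 p.2 -
          (if hk : p.2.val = 0 then x₁
           else v p.1 ⟨p.2.val - 1, Nat.lt_of_le_of_lt (Nat.sub_le _ _) p.2.isLt⟩) ^ 2) ^ 2) := by
  unfold hybridRosenbrockDensity hybridRosenbrockKernel
  rw [sub_eq_add_neg, Real.exp_add, ← mul_assoc]
  congr 1
  have h1 : (-(∑ j : Fin n₂, ∑ k : Fin (n₁ - 1),
      b j k * (v j k - (if hk : k.val = 0 then x₁
        else v j ⟨k.val - 1, by have := k.isLt; omega⟩) ^ 2) ^ 2)) =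
      ∑ j : Fin n₂, ∑ k : Fin (n₁ - 1),
      (-(b j k) * (v j k - (if hk : k.val = 0 then x₁
        else v j ⟨k.val - 1, by have := k.isLt; omega⟩) ^ 2) ^ 2) := by
    rw [← Finset.sum_neg_distrib]
    apply Finset.sum_congr rfl
    intro j _
    rw [← Finset.sum_neg_distrib]
    apply Finset.sum_congr rfl
    intro k _
    ring
  rw [h1]
  rw [Real.exp_sum]
  rw [Fintype.prod_prod_type
    (f := fun p : Fin n₂ × Fin (n₁ - 1) =>
      Real.exp (-(b p.1 p.2) * (v p.1 p.2 -
        (if hk : p.2.val = 0 then x₁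
         else v p.1 ⟨p.2.val - 1, Nat.lt_of_le_of_lt (Nat.sub_le _ _) p.2.isLt⟩) ^ 2) ^ 2))]
  apply Finset.prod_congr rfl
  intro j _
  rw [Real.exp_sum]

/-- the conditional mean (squared previous coordinate), as a function of the integrated
coordinates. -/
noncomputable def Maux (n₁ n₂ : ℕ) (P : Fin n₂ × Fin (n₁ - 1) → Prop) [DecidablePred P]
    (x₁ : ℝ) (xs : Fin n₂ → Fin (n₁ - 1) → ℝ)
    (q : {p : Fin n₂ × Fin (n₁ - 1) // P p}) (z : {p : Fin n₂ × Fin (n₁ - 1) // P p} → ℝ) :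
    ℝ :=
  (if _ : q.1.2.val = 0 then x₁
   else
     (fun j' k' => if h : P (j', k') then z ⟨(j', k'), h⟩ else xs j' k') q.1.1
       ⟨q.1.2.val - 1, Nat.lt_of_le_of_lt (Nat.sub_le _ _) q.1.2.isLt⟩) ^ 2

lemma marginal_eq (n₁ n₂ : ℕ) (μ a : ℝ)
    (b : Fin n₂ → Fin (n₁ - 1) → ℝ) (hb : ∀ j k, 0 < b j k)
    (P : Fin n₂ × Fin (n₁ - 1) → Prop) [DecidablePred P]
    (hP : ∀ (j' : Fin n₂) (k k' : Fin (n₁ - 1)), k.val ≤ k'.val → P (j', k) → P (j', k'))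
    (x₁ : ℝ) (xs : Fin n₂ → Fin (n₁ - 1) → ℝ) :
    hybridRosenbrockMarginal n₁ n₂ μ a b P x₁ xs =
      (Real.sqrt a * (∏ j : Fin n₂, ∏ k : Fin (n₁ - 1), Real.sqrt (b j k)) /
        π ^ ((((n₁ - 1) * n₂ + 1 : ℕ) : ℝ) / 2)) *
      Real.exp (-a * (x₁ - μ) ^ 2) *
      ∏ p : Fin n₂ × Fin (n₁ - 1),
        (if P p then Real.sqrt (π / b p.1 p.2)
         else Real.exp (-(b p.1 p.2) * (xs p.1 p.2 -
           (if hk : p.2.val = 0 then x₁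
            else xs p.1 ⟨p.2.val - 1,
              Nat.lt_of_le_of_lt (Nat.sub_le _ _) p.2.isLt⟩) ^ 2) ^ 2)) := by
  classical
  unfold hybridRosenbrockMarginal
  have point : ∀ z : {p : Fin n₂ × Fin (n₁ - 1) // P p} → ℝ,
      hybridRosenbrockDensity n₁ n₂ μ a b x₁
        (fun j' k' => if h : P (j', k') then z ⟨(j', k'), h⟩ else xs j' k') =
      ((Real.sqrt a * (∏ j : Fin n₂, ∏ k : Fin (n₁ - 1), Real.sqrt (b j k)) /
          π ^ ((((n₁ - 1) * n₂ + 1 : ℕ) : ℝ) / 2)) *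
        Real.exp (-a * (x₁ - μ) ^ 2) *
        ∏ p : {p : Fin n₂ × Fin (n₁ - 1) // ¬ P p},
          Real.exp (-(b p.1.1 p.1.2) * (xs p.1.1 p.1.2 -
            (if hk : p.1.2.val = 0 then x₁
             else xs p.1.1 ⟨p.1.2.val - 1,
               Nat.lt_of_le_of_lt (Nat.sub_le _ _) p.1.2.isLt⟩) ^ 2) ^ 2)) *
      ∏ q : {p : Fin n₂ × Fin (n₁ - 1) // P p},
        Real.exp (-(b q.1.1 q.1.2) * (z q - Maux n₁ n₂ P x₁ xs q z) ^ 2) := by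
    intro z
    rw [density_prod]
    rw [← Fintype.prod_subtype_mul_prod_subtype P
      (fun p : Fin n₂ × Fin (n₁ - 1) =>
        Real.exp (-(b p.1 p.2) *
          ((if h : P (p.1, p.2) then z ⟨(p.1, p.2), h⟩ else xs p.1 p.2) -
            (if hk : p.2.val = 0 then x₁
             else if h : P (p.1, ⟨p.2.val - 1,
                 Nat.lt_of_le_of_lt (Nat.sub_le _ _) p.2.isLt⟩) then
               z ⟨(p.1, ⟨p.2.val - 1, Nat.lt_of_le_of_lt (Nat.sub_le _ _) p.2.isLt⟩), h⟩
             else xs p.1 ⟨p.2.val - 1,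
               Nat.lt_of_le_of_lt (Nat.sub_le _ _) p.2.isLt⟩) ^ 2) ^ 2))]
    have e1 : ∀ q : {p : Fin n₂ × Fin (n₁ - 1) // P p},
        Real.exp (-(b q.1.1 q.1.2) *
          ((if h : P (q.1.1, q.1.2) then z ⟨(q.1.1, q.1.2), h⟩ else xs q.1.1 q.1.2) -
            (if hk : q.1.2.val = 0 then x₁
             else if h : P (q.1.1, ⟨q.1.2.val - 1,
                 Nat.lt_of_le_of_lt (Nat.sub_le _ _) q.1.2.isLt⟩) then
               z ⟨(q.1.1, ⟨q.1.2.val - 1, Nat.lt_of_le_of_lt (Nat.sub_le _ _) q.1.2.isLt⟩), h⟩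
             else xs q.1.1 ⟨q.1.2.val - 1,
               Nat.lt_of_le_of_lt (Nat.sub_le _ _) q.1.2.isLt⟩) ^ 2) ^ 2) =
        Real.exp (-(b q.1.1 q.1.2) * (z q - Maux n₁ n₂ P x₁ xs q z) ^ 2) := by
      rintro ⟨⟨j', k'⟩, hq⟩
      have h1 : (if h : P ((j', k').1, (j', k').2) then z ⟨((j', k').1, (j', k').2), h⟩
          else xs (j', k').1 (j', k').2) = z ⟨(j', k'), hq⟩ := dif_pos hq
      simp only [Maux, h1]
    have e2 : ∀ p : {p : Fin n₂ × Fin (n₁ - 1) // ¬ P p},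
        Real.exp (-(b p.1.1 p.1.2) *
          ((if h : P (p.1.1, p.1.2) then z ⟨(p.1.1, p.1.2), h⟩ else xs p.1.1 p.1.2) -
            (if hk : p.1.2.val = 0 then x₁
             else if h : P (p.1.1, ⟨p.1.2.val - 1,
                 Nat.lt_of_le_of_lt (Nat.sub_le _ _) p.1.2.isLt⟩) then
               z ⟨(p.1.1, ⟨p.1.2.val - 1, Nat.lt_of_le_of_lt (Nat.sub_le _ _) p.1.2.isLt⟩), h⟩
             else xs p.1.1 ⟨p.1.2.val - 1,
               Nat.lt_of_le_of_lt (Nat.sub_le _ _) p.1.2.isLt⟩) ^ 2) ^ 2) =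
        Real.exp (-(b p.1.1 p.1.2) * (xs p.1.1 p.1.2 -
          (if hk : p.1.2.val = 0 then x₁
           else xs p.1.1 ⟨p.1.2.val - 1,
             Nat.lt_of_le_of_lt (Nat.sub_le _ _) p.1.2.isLt⟩) ^ 2) ^ 2) := by
      rintro ⟨⟨j', k'⟩, hp⟩
      have h1 : (if h : P ((j', k').1, (j', k').2) then z ⟨((j', k').1, (j', k').2), h⟩
          else xs (j', k').1 (j', k').2) = xs j' k' := dif_neg hp
      simp only [h1]
      by_cases h0 : k'.val = 0
      · simp only [dif_pos h0]
      · have hnp : ¬ P (j', ⟨k'.val - 1,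
            Nat.lt_of_le_of_lt (Nat.sub_le _ _) k'.isLt⟩) := by
          intro hcontra
          exact hp (hP j' _ k' (by simp) hcontra)
        simp only [dif_neg h0, dif_neg hnp]
    rw [Fintype.prod_congr _ _ e1, Fintype.prod_congr _ _ e2]
    ring
  simp only [point]
  rw [MeasureTheory.integral_const_mul]
  rw [chain_integral (fun q : {p : Fin n₂ × Fin (n₁ - 1) // P p} => b q.1.1 q.1.2)
    (fun q => q.1.2.val) (Maux n₁ n₂ P x₁ xs)
    (fun q => hb q.1.1 q.1.2)
    (fun q => by
      unfold Maux
      apply Measurable.pow_const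
      by_cases h0 : q.1.2.val = 0
      · simp only [dif_pos h0]; exact measurable_const
      · simp only [dif_neg h0]
        by_cases hpp : P (q.1.1, ⟨q.1.2.val - 1,
            Nat.lt_of_le_of_lt (Nat.sub_le _ _) q.1.2.isLt⟩)
        · simp only [dif_pos hpp]; exact measurable_pi_apply _
        · simp only [dif_neg hpp]; exact measurable_const)
    (fun q z z' hzz => by
      unfold Maux
      by_cases h0 : q.1.2.val = 0
      · simp only [dif_pos h0]
      · simp only [dif_neg h0]
        by_cases hpp : P (q.1.1, ⟨q.1.2.val - 1,
            Nat.lt_of_le_of_lt (Nat.sub_le _ _) q.1.2.isLt⟩)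
        · simp only [dif_pos hpp]
          congr 1
          exact hzz ⟨(q.1.1, ⟨q.1.2.val - 1, _⟩), hpp⟩ (by simp; omega)
        · simp only [dif_neg hpp])]
  -- now the algebraic rearrangement
  rw [← Fintype.prod_subtype_mul_prod_subtype P
    (fun p : Fin n₂ × Fin (n₁ - 1) =>
      (if P p then Real.sqrt (π / b p.1 p.2)
       else Real.exp (-(b p.1 p.2) * (xs p.1 p.2 -
         (if hk : p.2.val = 0 then x₁
          else xs p.1 ⟨p.2.val - 1,
            Nat.lt_of_le_of_lt (Nat.sub_le _ _) p.2.isLt⟩) ^ 2) ^ 2)))]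
  have e3 : ∀ q : {p : Fin n₂ × Fin (n₁ - 1) // P p},
      (if P q.1 then Real.sqrt (π / b q.1.1 q.1.2)
       else Real.exp (-(b q.1.1 q.1.2) * (xs q.1.1 q.1.2 -
         (if hk : q.1.2.val = 0 then x₁
          else xs q.1.1 ⟨q.1.2.val - 1,
            Nat.lt_of_le_of_lt (Nat.sub_le _ _) q.1.2.isLt⟩) ^ 2) ^ 2)) =
      Real.sqrt (π / b q.1.1 q.1.2) := fun q => if_pos q.2
  have e4 : ∀ p : {p : Fin n₂ × Fin (n₁ - 1) // ¬ P p},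
      (if P p.1 then Real.sqrt (π / b p.1.1 p.1.2)
       else Real.exp (-(b p.1.1 p.1.2) * (xs p.1.1 p.1.2 -
         (if hk : p.1.2.val = 0 then x₁
          else xs p.1.1 ⟨p.1.2.val - 1,
            Nat.lt_of_le_of_lt (Nat.sub_le _ _) p.1.2.isLt⟩) ^ 2) ^ 2)) =
      Real.exp (-(b p.1.1 p.1.2) * (xs p.1.1 p.1.2 -
         (if hk : p.1.2.val = 0 then x₁
          else xs p.1.1 ⟨p.1.2.val - 1,
            Nat.lt_of_le_of_lt (Nat.sub_le _ _) p.1.2.isLt⟩) ^ 2) ^ 2) :=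
    fun p => if_neg p.2
  rw [Fintype.prod_congr _ _ e3, Fintype.prod_congr _ _ e4]
  ring

/-- Ordering the coordinates of the Hybrid Rosenbrock distribution as
`x₁, x_{1,2}, …, x_{1,n₁}, x_{2,2}, …, x_{n₂,n₁}`, the conditional density of
`x_{j,i}` given all preceding coordinates — the ratio of the marginal integrating
out the coordinates strictly after `x_{j,i}` to the marginal integrating out
`x_{j,i}` together with all coordinates after it — is the Gaussian density with
mean `x_{j,i-1}²` and variance `1/(2 b_{j,i})`; in particular it depends on the
preceding coordinates only through `x_{j,i-1}` (which is `x₁` when `i = 2`). -/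
theorem hybridRosenbrock_conditional (n₁ n₂ : ℕ)
    (h₁ : 2 ≤ n₁) (h₂ : 1 ≤ n₂) (μ a : ℝ) (ha : 0 < a)
    (b : Fin n₂ → Fin (n₁ - 1) → ℝ) (hb : ∀ j k, 0 < b j k)
    (j : Fin n₂) (k : Fin (n₁ - 1))
    (x₁ : ℝ) (xs : Fin n₂ → Fin (n₁ - 1) → ℝ) :
    hybridRosenbrockMarginal n₁ n₂ μ a b
        (fun p => j < p.1 ∨ (p.1 = j ∧ k < p.2)) x₁ xs /
      hybridRosenbrockMarginal n₁ n₂ μ a b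
        (fun p => j < p.1 ∨ (p.1 = j ∧ k ≤ p.2)) x₁ xs
      = Real.sqrt (b j k / π) *
          Real.exp (-(b j k) *
            (xs j k -
              (if hk : k.val = 0 then x₁
               else xs j ⟨k.val - 1, by have := k.isLt; omega⟩) ^ 2) ^ 2) := by
  classical
  have hP1 : ∀ (j' : Fin n₂) (kk kk' : Fin (n₁ - 1)), kk.val ≤ kk'.val →
      (fun p : Fin n₂ × Fin (n₁ - 1) => j < p.1 ∨ (p.1 = j ∧ k < p.2)) (j', kk) →
      (fun p : Fin n₂ × Fin (n₁ - 1) => j < p.1 ∨ (p.1 = j ∧ k < p.2)) (j', kk') := by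
    rintro j' kk kk' hle (h | ⟨hh1, hh2⟩)
    · exact Or.inl h
    · refine Or.inr ⟨hh1, ?_⟩
      have h2 : k < kk := hh2
      exact Fin.lt_def.mpr (lt_of_lt_of_le (Fin.lt_def.mp h2) hle)
  have hP2 : ∀ (j' : Fin n₂) (kk kk' : Fin (n₁ - 1)), kk.val ≤ kk'.val →
      (fun p : Fin n₂ × Fin (n₁ - 1) => j < p.1 ∨ (p.1 = j ∧ k ≤ p.2)) (j', kk) →
      (fun p : Fin n₂ × Fin (n₁ - 1) => j < p.1 ∨ (p.1 = j ∧ k ≤ p.2)) (j', kk') := by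
    rintro j' kk kk' hle (h | ⟨hh1, hh2⟩)
    · exact Or.inl h
    · refine Or.inr ⟨hh1, ?_⟩
      have h2 : k ≤ kk := hh2
      exact Fin.le_def.mpr (le_trans (Fin.le_def.mp h2) hle)
  rw [marginal_eq n₁ n₂ μ a b hb _ hP1 x₁ xs, marginal_eq n₁ n₂ μ a b hb _ hP2 x₁ xs]
  have hCE : (Real.sqrt a * (∏ j : Fin n₂, ∏ k : Fin (n₁ - 1), Real.sqrt (b j k)) /
      π ^ ((((n₁ - 1) * n₂ + 1 : ℕ) : ℝ) / 2)) * Real.exp (-a * (x₁ - μ) ^ 2) ≠ 0 := by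
    apply ne_of_gt
    apply mul_pos _ (Real.exp_pos _)
    apply div_pos
    · apply mul_pos (Real.sqrt_pos.mpr ha)
      exact Finset.prod_pos fun j' _ => Finset.prod_pos fun k' _ =>
        Real.sqrt_pos.mpr (hb j' k')
    · exact Real.rpow_pos_of_pos Real.pi_pos _
  rw [mul_div_mul_left _ _ hCE]
  rw [← Finset.mul_prod_erase Finset.univ
    (fun p : Fin n₂ × Fin (n₁ - 1) =>
      (if j < p.1 ∨ (p.1 = j ∧ k < p.2) then Real.sqrt (π / b p.1 p.2)
       else Real.exp (-(b p.1 p.2) * (xs p.1 p.2 -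
         (if hk : p.2.val = 0 then x₁
          else xs p.1 ⟨p.2.val - 1,
            Nat.lt_of_le_of_lt (Nat.sub_le _ _) p.2.isLt⟩) ^ 2) ^ 2)))
    (Finset.mem_univ ((j, k) : Fin n₂ × Fin (n₁ - 1))),
    ← Finset.mul_prod_erase Finset.univ
    (fun p : Fin n₂ × Fin (n₁ - 1) =>
      (if j < p.1 ∨ (p.1 = j ∧ k ≤ p.2) then Real.sqrt (π / b p.1 p.2)
       else Real.exp (-(b p.1 p.2) * (xs p.1 p.2 -
         (if hk : p.2.val = 0 then x₁
          else xs p.1 ⟨p.2.val - 1,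
            Nat.lt_of_le_of_lt (Nat.sub_le _ _) p.2.isLt⟩) ^ 2) ^ 2)))
    (Finset.mem_univ ((j, k) : Fin n₂ × Fin (n₁ - 1)))]
  have hrest : (∏ p ∈ Finset.univ.erase ((j, k) : Fin n₂ × Fin (n₁ - 1)),
      (if j < p.1 ∨ (p.1 = j ∧ k < p.2) then Real.sqrt (π / b p.1 p.2)
       else Real.exp (-(b p.1 p.2) * (xs p.1 p.2 -
         (if hk : p.2.val = 0 then x₁
          else xs p.1 ⟨p.2.val - 1,
            Nat.lt_of_le_of_lt (Nat.sub_le _ _) p.2.isLt⟩) ^ 2) ^ 2))) =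
      ∏ p ∈ Finset.univ.erase ((j, k) : Fin n₂ × Fin (n₁ - 1)),
      (if j < p.1 ∨ (p.1 = j ∧ k ≤ p.2) then Real.sqrt (π / b p.1 p.2)
       else Real.exp (-(b p.1 p.2) * (xs p.1 p.2 -
         (if hk : p.2.val = 0 then x₁
          else xs p.1 ⟨p.2.val - 1,
            Nat.lt_of_le_of_lt (Nat.sub_le _ _) p.2.isLt⟩) ^ 2) ^ 2)) := by
    apply Finset.prod_congr rfl
    intro p hp
    have hpne : p ≠ (j, k) := (Finset.mem_erase.mp hp).1
    have hiff : (j < p.1 ∨ (p.1 = j ∧ k < p.2)) ↔ (j < p.1 ∨ (p.1 = j ∧ k ≤ p.2)) := by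
      constructor
      · rintro (h | ⟨hh1, hh2⟩)
        · exact Or.inl h
        · exact Or.inr ⟨hh1, le_of_lt hh2⟩
      · rintro (h | ⟨hh1, hh2⟩)
        · exact Or.inl h
        · rcases lt_or_eq_of_le hh2 with hlt | heq
          · exact Or.inr ⟨hh1, hlt⟩
          · exact absurd (Prod.ext hh1 heq.symm) hpne
    exact if_congr hiff rfl rfl
  rw [hrest]
  rw [mul_div_mul_right _ _ (by
    apply ne_of_gt
    apply Finset.prod_pos
    intro p _
    split_ifs <;>
      first
        | exact Real.sqrt_pos.mpr (div_pos Real.pi_pos (hb _ _))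
        | exact Real.exp_pos _)]
  rw [if_neg (by
    rintro (h | ⟨-, hh2⟩)
    · exact absurd h (lt_irrefl j)
    · exact absurd hh2 (lt_irrefl k)),
    if_pos (Or.inr ⟨rfl, le_refl k⟩)]
  rw [div_eq_mul_inv, ← Real.sqrt_inv, inv_div, mul_comm]
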